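/- (Theorem 8) The combined operator P U^y_π satisfies (P U^y_π) U^tw_{±2π} = (−1)^{2S} U^tw_{±2π} (P U^y_π). Consequently, if 2S is odd and ψ₀ ∈ H_L satisfies P U^y_π ψ₀ = ±ψ₀, then ⟨ψ₀, U^tw_{2π} ψ₀⟩ = 0. -/

import Mathlib

open scoped BigOperators Matrix
open Fin.NatCast
noncomputable section

namespace LSM

/-- Number of basis states per site: `2S+1`. -/
abbrev N (twoS : ℕ) : ℕ := twoS + 1

/-- The spin value `S` as a real number (so `2S = twoS`). -/
def spin (twoS : ℕ) : ℝ := (twoS : ℝ) / 2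

/-- The `S^z`-value of the `k`-th basis vector: `m = S - k`, `k = 0, …, 2S`. -/
def mval (twoS : ℕ) (k : Fin (N twoS)) : ℝ := spin twoS - (k : ℕ)

/-- Single-site `S^z` matrix. -/
def SzMat (twoS : ℕ) : Matrix (Fin (N twoS)) (Fin (N twoS)) ℂ :=
  Matrix.diagonal fun k => (mval twoS k : ℂ)

/-- Single-site raising operator `S^+`. -/
def SpMat (twoS : ℕ) : Matrix (Fin (N twoS)) (Fin (N twoS)) ℂ :=
  Matrix.of fun a b =>
    if (a : ℕ) + 1 = (b : ℕ) then
      ((Real.sqrt (spin twoS * (spin twoS + 1) - mval twoS b * (mval twoS b + 1)) : ℝ) : ℂ)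
    else 0

/-- Single-site lowering operator `S^-`. -/
def SmMat (twoS : ℕ) : Matrix (Fin (N twoS)) (Fin (N twoS)) ℂ :=
  Matrix.of fun a b =>
    if (a : ℕ) = (b : ℕ) + 1 then
      ((Real.sqrt (spin twoS * (spin twoS + 1) - mval twoS b * (mval twoS b - 1)) : ℝ) : ℂ)
    else 0

/-- Single-site `S^y = (S^+ - S^-)/(2i)`. -/
def SyMat (twoS : ℕ) : Matrix (Fin (N twoS)) (Fin (N twoS)) ℂ :=
  ((2 : ℂ) * Complex.I)⁻¹ • (SpMat twoS - SmMat twoS)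

/-- Single-site `S^x = (S^+ + S^-)/2`. -/
def SxMat (twoS : ℕ) : Matrix (Fin (N twoS)) (Fin (N twoS)) ℂ :=
  ((2 : ℂ))⁻¹ • (SpMat twoS + SmMat twoS)

/-- Configurations (product basis labels) of the chain of length `L`. -/
abbrev Conf (twoS L : ℕ) := Fin L → Fin (N twoS)

/-- Operators on the chain Hilbert space `⊗_{j=1}^L ℂ^{2S+1}`, as matrices in the
product basis. -/
abbrev Op (twoS L : ℕ) := Matrix (Conf twoS L) (Conf twoS L) ℂ

/-- The single-site matrix `A` acting on the `j`-th tensor factor (identity elsewhere). -/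
def site (twoS L : ℕ) (j : Fin L) (A : Matrix (Fin (N twoS)) (Fin (N twoS)) ℂ) :
    Op twoS L :=
  Matrix.of fun x y => if ∀ i, i ≠ j → x i = y i then A (x j) (y j) else 0

/-- Total `S^z`. -/
def SzT (twoS L : ℕ) : Op twoS L := ∑ j : Fin L, site twoS L j (SzMat twoS)

/-- Total `S^y`. -/
def SyT (twoS L : ℕ) : Op twoS L := ∑ j : Fin L, site twoS L j (SyMat twoS)

/-- Translation by one site: the permutation matrix with
`Utrl† A_j Utrl = A_{j+1}` for every single-site operator `A`. -/
def Utrl (twoS L : ℕ) [NeZero L] : Op twoS L :=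
  Matrix.of fun x y => if x = (fun i => y (i + 1)) then 1 else 0

/-- Site parity (space inversion `j ↦ L - j = -j (mod L)`): the permutation matrix with
`P† A_j P = A_{L-j}` for every single-site operator `A`. -/
def Pop (twoS L : ℕ) [NeZero L] : Op twoS L :=
  Matrix.of fun x y => if x = (fun i => y (-i)) then 1 else 0

/-- Link parity `P_link = P U_trl`. -/
def Plink (twoS L : ℕ) [NeZero L] : Op twoS L := Pop twoS L * Utrl twoS L

/-- The generalized XXZ Hamiltonian with periodic boundary conditions. -/
def Ham (twoS L : ℕ) [NeZero L] (J Δ : ℕ → ℝ) (h : ℝ) : Op twoS L :=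
  (∑ j : Fin L, ∑ r ∈ Finset.Icc 1 (L / 2),
      ((((J r : ℝ) : ℂ) / 2) •
        (site twoS L j (SpMat twoS) * site twoS L (j + (r : Fin L)) (SmMat twoS) +
          site twoS L j (SmMat twoS) * site twoS L (j + (r : Fin L)) (SpMat twoS)) +
      ((Δ r : ℝ) : ℂ) •
        (site twoS L j (SzMat twoS) * site twoS L (j + (r : Fin L)) (SzMat twoS)))) +
    (h : ℂ) • SzT twoS L

/-- The generator `Σ_{j=1}^{L} j (S^z_j - S)` of the (site-centered) twist. -/
def twistGen (twoS L : ℕ) [NeZero L] : Op twoS L :=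
  ∑ j ∈ Finset.Icc 1 L,
    (j : ℂ) • site twoS L ((j : ℕ) : Fin L) (SzMat twoS - ((spin twoS : ℝ) : ℂ) • 1)

/-- The twist operator `U^tw_{ε·2π} = exp(-ε (2πi/L) Σ_j j (S^z_j - S))`, `ε = ±1`. -/
def Utw (twoS L : ℕ) [NeZero L] (ε : ℝ) : Op twoS L :=
  NormedSpace.exp ((-(ε : ℂ) * ((2 * Real.pi / L : ℝ) : ℂ) * Complex.I) • twistGen twoS L)

/-- The generator `Σ_{j=1}^{L} (j - 1/2)(S^z_j - S)` of the link-centered twist. -/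
def twistGenL (twoS L : ℕ) [NeZero L] : Op twoS L :=
  ∑ j ∈ Finset.Icc 1 L,
    ((j : ℂ) - 1 / 2) • site twoS L ((j : ℕ) : Fin L) (SzMat twoS - ((spin twoS : ℝ) : ℂ) • 1)

/-- The link-centered twist operator `U^twl_{ε·2π}`, `ε = ±1`. -/
def UtwL (twoS L : ℕ) [NeZero L] (ε : ℝ) : Op twoS L :=
  NormedSpace.exp ((-(ε : ℂ) * ((2 * Real.pi / L : ℝ) : ℂ) * Complex.I) • twistGenL twoS L)

/-- The spin-reversal operator `U^y_π = exp(-iπ S^y_T)`. -/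
def Uy (twoS L : ℕ) : Op twoS L :=
  NormedSpace.exp ((-Complex.I * ((Real.pi : ℝ) : ℂ)) • SyT twoS L)

/-- The sector `V(M, q)` of simultaneous eigenvectors of `S^z_T` (eigenvalue `M`) and of
the translation `U_trl` (eigenvalue `e^{iq}`). -/
def Vsp (twoS L : ℕ) [NeZero L] (M q : ℝ) : Submodule ℂ (Conf twoS L → ℂ) :=
  Module.End.eigenspace (Matrix.mulVecLin (SzT twoS L)) ((M : ℝ) : ℂ) ⊓
    Module.End.eigenspace (Matrix.mulVecLin (Utrl twoS L)) (Complex.exp (Complex.I * q))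

/-- `E(M; q)`: the smallest eigenvalue of `H` restricted to the sector `V(M,q)`. -/
def En (twoS L : ℕ) [NeZero L] (J Δ : ℕ → ℝ) (h : ℝ) (M q : ℝ) : ℝ :=
  sInf {E : ℝ | ∃ ψ ∈ Vsp twoS L M q, ψ ≠ 0 ∧
    (Ham twoS L J Δ h).mulVec ψ = ((E : ℝ) : ℂ) • ψ}

/-- The expectation value `⟨ψ, A ψ⟩`. -/
def expVal (twoS L : ℕ) (A : Op twoS L) (ψ : Conf twoS L → ℂ) : ℂ :=
  dotProduct (star ψ) (A.mulVec ψ)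

/-- `q` belongs to the lattice `(2π/L)ℤ` of allowed wavenumbers. -/
def allowedQ (L : ℕ) (q : ℝ) : Prop := ∃ k : ℤ, q = 2 * Real.pi * k / L

/-!
In the product basis `U^tw_{±2π}` is diagonal: the configuration `x` gets the phase `ζ ^ w x`,
where `ζ = e^{±2πi/L}` and `w x = Σ_{j=1}^L j (S - m_j)`. Conjugation by `exp(-iπ S^y_T)` rotates
`(S^z_j, S^x_j)` by the angle `π`, so `U^y_π` anticommutes with every `S^z_j`, and `P U^y_π` maps
the basis vector `x` to a multiple of the basis vector with labels `S - m'_j = 2S - (S - m_{-j})`.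
Modulo `L` the weight of the latter is `w x + 2S Σ_j j ≡ w x + 2S · L/2`, and `ζ ^ (L/2) = -1`
for even `L`: the two twist phases differ by `(-1)^{2S}`. For odd `2S` the unitary `P U^y_π`
therefore anticommutes with `U^tw_{2π}`, and an eigenvector `ψ₀` of `P U^y_π` has
`⟨ψ₀, U^tw_{2π} ψ₀⟩ = -⟨ψ₀, U^tw_{2π} ψ₀⟩`.
-/

section General

open NormedSpace in
/-- Conjugation by `exp (t • K)` rotates the pair `(B, C)` by the angle `t`; at `t = π` it
negates `B`. -/
theorem exp_pi_smul_mul_eq_neg_mul {𝔸 : Type*} [NormedRing 𝔸] [NormedAlgebra ℝ 𝔸]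
    [CompleteSpace 𝔸] {K B C : 𝔸} (hB : ⁅K, B⁆ = C) (hC : ⁅K, C⁆ = -B) :
    exp (Real.pi • K) * B = -B * exp (Real.pi • K) := by
  rw [Ring.lie_def] at hB hC
  let M : ℝ → 𝔸 := fun t => Real.cos t • B + Real.sin t • C
  let f : ℝ → 𝔸 := fun t => exp (t • -K) * M t * exp (t • K)
  have hf : ∀ t, HasDerivAt f 0 t := by
    intro t
    have hM : HasDerivAt M ((-Real.sin t) • B + Real.cos t • C) t :=
      ((Real.hasDerivAt_cos t).smul_const B).add ((Real.hasDerivAt_sin t).smul_const C)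
    refine (((hasDerivAt_exp_smul_const (-K) t).mul hM).mul
      (hasDerivAt_exp_smul_const' K t)).congr_deriv ?_
    have hcomm : K * M t - M t * K =
        Real.cos t • (K * B - B * K) + Real.sin t • (K * C - C * K) := by
      simp only [M, mul_add, add_mul, mul_smul_comm, smul_mul_assoc]
      module
    rw [hB, hC] at hcomm
    calc (exp (t • -K) * -K * M t + exp (t • -K) * ((-Real.sin t) • B + Real.cos t • C)) *
          exp (t • K) + exp (t • -K) * M t * (K * exp (t • K))
        = exp (t • -K) * ((-Real.sin t) • B + Real.cos t • C - (K * M t - M t * K)) *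
          exp (t • K) := by noncomm_ring
      _ = 0 := by
        rw [hcomm, show (-Real.sin t) • B + Real.cos t • C - (Real.cos t • C + Real.sin t • -B) =
          0 by module, mul_zero, zero_mul]
  have hconst : f Real.pi = f 0 :=
    is_const_of_deriv_eq_zero (fun t => (hf t).differentiableAt) (fun t => (hf t).deriv) _ _
  simp only [f, M, Real.cos_pi, Real.sin_pi, Real.cos_zero, Real.sin_zero, zero_smul, add_zero,
    one_smul, neg_one_smul, exp_zero, one_mul, mul_one] at hconst
  have hinv : exp (Real.pi • K) * exp (Real.pi • -K) = 1 := by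
    rw [← exp_add_of_commute_of_mem_ball (𝕂 := ℝ)
      ((Commute.refl K).neg_right.smul_left _ |>.smul_right _)
      ((expSeries_radius_eq_top ℝ 𝔸).symm ▸ edist_lt_top _ _)
      ((expSeries_radius_eq_top ℝ 𝔸).symm ▸ edist_lt_top _ _), smul_neg, add_neg_cancel, exp_zero]
  calc exp (Real.pi • K) * B
      = exp (Real.pi • K) * (exp (Real.pi • -K) * -B * exp (Real.pi • K)) := by rw [hconst]
    _ = -B * exp (Real.pi • K) := by rw [← mul_assoc, ← mul_assoc, hinv, one_mul]

lemma sum_eq_sum_update {ι β α : Type*} [Fintype ι] [DecidableEq ι] [Fintype β] [DecidableEq β]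
    [AddCommMonoid α] (j : ι) (x : ι → β) (g : (ι → β) → α)
    (hg : ∀ z, ¬ (∀ i, i ≠ j → x i = z i) → g z = 0) :
    ∑ z, g z = ∑ k, g (Function.update x j k) := by
  rw [← Finset.sum_image fun _ _ _ _ h => Function.update_injective x j h]
  refine (Finset.sum_subset (Finset.subset_univ _) fun z _ hz => hg z fun h => hz ?_).symm
  refine Finset.mem_image.mpr ⟨z j, Finset.mem_univ _, funext fun i => ?_⟩
  by_cases hij : i = j
  · subst hij; rw [Function.update_self]
  · rw [Function.update_of_ne hij, h i hij]

lemma sum_Icc_one_eq_sum_range {M : Type*} [AddCancelCommMonoid M] (g : ℕ → M) {L : ℕ}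
    (h : g L = g 0) : ∑ j ∈ Finset.Icc 1 L, g j = ∑ j ∈ Finset.range L, g j := by
  have hshift : ∑ j ∈ Finset.Icc 1 L, g j = ∑ j ∈ Finset.range L, g (j + 1) := by
    rw [← Finset.Ico_add_one_right_eq_Icc, Finset.sum_Ico_eq_sum_range]
    simp [add_comm]
  apply add_right_cancel (b := g 0)
  rw [hshift, ← Finset.sum_range_succ', Finset.sum_range_succ, h]

lemma natCast_val_neg {n : ℕ} (i : Fin n) :
    (((-i : Fin n) : ℕ) : ZMod n) = -((i : ℕ) : ZMod n) := by
  rw [Fin.val_neg', ZMod.natCast_mod, Nat.cast_sub i.is_lt.le, ZMod.natCast_self, zero_sub]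

lemma sum_range_id_add_self_add (m : ℕ) : ∑ i ∈ Finset.range (m + m), i + m = m * (m + m) := by
  induction m with
  | zero => simp
  | succ n ih =>
    rw [show n + 1 + (n + 1) = n + n + 1 + 1 by ring, Finset.sum_range_succ, Finset.sum_range_succ]
    nlinarith

lemma sum_natCast_val {n : ℕ} (hn : Even n) :
    ∑ i : Fin n, ((i : ℕ) : ZMod n) = -((n / 2 : ℕ) : ZMod n) := by
  obtain ⟨m, rfl⟩ := hn
  rw [Fin.sum_univ_eq_sum_range (fun i => (i : ZMod (m + m))), ← Nat.cast_sum,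
    show (m + m) / 2 = m by omega]
  refine eq_neg_of_add_eq_zero_left ?_
  rw [← Nat.cast_add, sum_range_id_add_self_add, Nat.cast_mul, ZMod.natCast_self, mul_zero]

lemma pow_eq_neg_one_pow_mul_pow {R : Type*} [CommMonoid R] [HasDistribNeg R] {ζ : R}
    {n m a b s : ℕ} (hn : ζ ^ n = 1) (hm : ζ ^ m = -1) (hab : a ≡ b + s * m [MOD n]) :
    ζ ^ a = (-1) ^ s * ζ ^ b := by
  rw [pow_eq_pow_of_modEq hab hn, pow_add, pow_mul', hm, mul_comm]

lemma star_dotProduct_mulVec_eq_zero_of_anticommute {𝕜 n : Type*} [RCLike 𝕜] [Fintype n]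
    [DecidableEq n] {R T : Matrix n n 𝕜} (hR : Rᴴ * R = 1) (hRT : R * T = -(T * R))
    {ψ : n → 𝕜} {c : 𝕜} (hψ : R *ᵥ ψ = c • ψ) : star ψ ⬝ᵥ (T *ᵥ ψ) = 0 := by
  set v := star ψ ⬝ᵥ (T *ᵥ ψ)
  have hv : v = -(star c * c) * v := calc
    v = star ψ ⬝ᵥ ((Rᴴ * (R * T)) *ᵥ ψ) := by rw [← Matrix.mul_assoc, hR, Matrix.one_mul]
    _ = star (R *ᵥ ψ) ⬝ᵥ ((R * T) *ᵥ ψ) := by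
      rw [← Matrix.mulVec_mulVec, Matrix.dotProduct_mulVec, Matrix.star_mulVec]
    _ = star (c • ψ) ⬝ᵥ -(T *ᵥ (c • ψ)) := by
      rw [hRT, Matrix.neg_mulVec, ← Matrix.mulVec_mulVec, hψ]
    _ = -(star c * c) * v := by
      simp only [star_smul, Matrix.mulVec_smul, dotProduct_neg, smul_dotProduct, dotProduct_smul,
        smul_eq_mul, v]
      ring
  have hc : 1 + star c * c ≠ 0 := by
    rw [RCLike.star_def, RCLike.conj_mul]
    exact_mod_cast (by positivity : (0 : ℝ) < 1 + ‖c‖ ^ 2).ne'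
  exact (mul_eq_zero.mp (by linear_combination hv : (1 + star c * c) * v = 0)).resolve_left hc

end General

section SpinAlgebra

attribute [local instance] LieRing.ofAssociativeRing

variable {twoS L : ℕ}

/-- `S(S+1) - m(m+1)` at `m = S - n`: the squared entry of `S^+` in column `n`. -/
def ladderWeight (twoS n : ℕ) : ℝ := n * (twoS + 1 - n)

lemma ladderWeight_nonneg {n : ℕ} (hn : n ≤ twoS + 1) : 0 ≤ ladderWeight twoS n := by
  have : (n : ℝ) ≤ twoS + 1 := by exact_mod_cast hn
  unfold ladderWeight; nlinarith

lemma SpMat_apply (a b : Fin (N twoS)) :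
    SpMat twoS a b = if (a : ℕ) + 1 = b then (Real.sqrt (ladderWeight twoS b) : ℂ) else 0 := by
  rw [SpMat, Matrix.of_apply]
  congr 4
  simp only [ladderWeight, mval, spin]
  ring

lemma SmMat_eq_transpose : SmMat twoS = (SpMat twoS)ᵀ := by
  ext a b
  rw [Matrix.transpose_apply, SpMat_apply]
  unfold SmMat ladderWeight mval spin
  by_cases h : (a : ℕ) = b + 1
  · simp only [Matrix.of_apply, h]
    push_cast; congr 3; ring
  · simp only [Matrix.of_apply, if_neg h, if_neg (Ne.symm h)]

lemma SpMat_conjTranspose : (SpMat twoS)ᴴ = SmMat twoS := by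
  ext a b
  rw [SmMat_eq_transpose, Matrix.conjTranspose_apply, Matrix.transpose_apply, SpMat_apply]
  split_ifs <;> simp [Complex.conj_ofReal]

lemma SzMat_transpose : (SzMat twoS)ᵀ = SzMat twoS := Matrix.diagonal_transpose _

lemma lie_SzMat_SpMat : ⁅SzMat twoS, SpMat twoS⁆ = SpMat twoS := by
  ext a b
  simp only [Ring.lie_def, Matrix.sub_apply, SzMat, Matrix.diagonal_mul, Matrix.mul_diagonal,
    SpMat_apply]
  split_ifs with h
  · have h' : ((a : ℕ) : ℝ) + 1 = (b : ℕ) := by exact_mod_cast h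
    simp only [mval, ← h']
    push_cast; ring
  · ring

lemma lie_SzMat_SmMat : ⁅SzMat twoS, SmMat twoS⁆ = -SmMat twoS := by
  have h := congrArg Matrix.transpose (lie_SzMat_SpMat (twoS := twoS))
  rw [Ring.lie_def, Matrix.transpose_sub, Matrix.transpose_mul, Matrix.transpose_mul,
    SzMat_transpose] at h
  rw [SmMat_eq_transpose, Ring.lie_def, ← neg_sub, h]

lemma SpMat_apply_mul_self (a b : Fin (N twoS)) :
    SpMat twoS a b * SpMat twoS a b =
      if (a : ℕ) + 1 = b then (ladderWeight twoS b : ℂ) else 0 := by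
  rw [SpMat_apply]
  split_ifs
  · rw [← Complex.ofReal_mul,
      Real.mul_self_sqrt (ladderWeight_nonneg (b.is_le.trans (Nat.le_succ _)))]
  · rw [mul_zero]

lemma sum_SpMat_mul_self_row (a : Fin (N twoS)) :
    ∑ c, SpMat twoS a c * SpMat twoS a c = ladderWeight twoS (a + 1) := by
  simp_rw [SpMat_apply_mul_self]
  rw [Fin.sum_univ_eq_sum_range
    (fun c => if (a : ℕ) + 1 = c then (ladderWeight twoS c : ℂ) else 0), Finset.sum_ite_eq]
  split_ifs with h
  · rfl
  · have : (a : ℕ) = twoS := by simp only [Finset.mem_range, N] at h; omega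
    simp [ladderWeight, this]

lemma sum_SpMat_mul_self_col (a : Fin (N twoS)) :
    ∑ c, SpMat twoS c a * SpMat twoS c a = ladderWeight twoS a := by
  simp_rw [SpMat_apply_mul_self]
  rcases Nat.eq_zero_or_pos a with ha | ha
  · rw [Finset.sum_eq_zero fun c _ => if_neg (by omega), ha]
    simp [ladderWeight]
  · rw [Fintype.sum_eq_single ⟨a - 1, by omega⟩
      fun c hc => if_neg fun h => hc (by ext; simp; omega), if_pos (by simp; omega)]

lemma lie_SpMat_SmMat : ⁅SpMat twoS, SmMat twoS⁆ = (2 : ℂ) • SzMat twoS := by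
  ext a b
  rw [SmMat_eq_transpose, Ring.lie_def, Matrix.sub_apply, Matrix.mul_apply, Matrix.mul_apply,
    Matrix.smul_apply, SzMat]
  by_cases hab : a = b
  · subst hab
    simp only [Matrix.transpose_apply, sum_SpMat_mul_self_row, sum_SpMat_mul_self_col,
      Matrix.diagonal_apply_eq, ladderWeight, mval, spin]
    push_cast; ring
  · have hterm : ∀ c,
        SpMat twoS a c * SpMat twoS b c = 0 ∧ SpMat twoS c a * SpMat twoS c b = 0 := by
      intro c
      simp only [SpMat_apply]
      refine ⟨?_, ?_⟩ <;> split_ifs <;> first | exact absurd (Fin.ext (by omega)) hab | simp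
    simp [Matrix.transpose_apply, hterm, Matrix.diagonal_apply_ne _ hab]

lemma lie_SyMat_SzMat : ⁅SyMat twoS, SzMat twoS⁆ = Complex.I • SxMat twoS := by
  rw [SyMat, SxMat, smul_lie, sub_lie, ← lie_skew, lie_SzMat_SpMat, ← lie_skew (SmMat twoS),
    lie_SzMat_SmMat, smul_smul]
  rw [show -SpMat twoS - -(-SmMat twoS) = (-1 : ℂ) • (SpMat twoS + SmMat twoS) by module,
    smul_smul]
  congr 1
  field_simp
  rw [Complex.I_sq]

lemma lie_SyMat_SxMat : ⁅SyMat twoS, SxMat twoS⁆ = -Complex.I • SzMat twoS := by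
  rw [SyMat, SxMat, smul_lie, lie_smul, sub_lie, lie_add, lie_add, lie_self, lie_self,
    ← lie_skew (SmMat twoS), lie_SpMat_SmMat, smul_smul]
  rw [show (0 : Matrix (Fin (N twoS)) (Fin (N twoS)) ℂ) + (2 : ℂ) • SzMat twoS -
      (-((2 : ℂ) • SzMat twoS) + 0) = (4 : ℂ) • SzMat twoS by module, smul_smul]
  congr 1
  field_simp
  rw [Complex.I_sq]; norm_num

lemma SyMat_isHermitian : (SyMat twoS).IsHermitian := by
  have hc : star ((2 : ℂ) * Complex.I)⁻¹ = -((2 : ℂ) * Complex.I)⁻¹ := by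
    simp [Complex.conj_I, mul_comm]
  rw [Matrix.IsHermitian, SyMat, Matrix.conjTranspose_smul, Matrix.conjTranspose_sub,
    SpMat_conjTranspose, ← SpMat_conjTranspose, Matrix.conjTranspose_conjTranspose, hc, neg_smul,
    ← smul_neg, neg_sub]

lemma site_apply_update (j : Fin L) (A : Matrix (Fin (N twoS)) (Fin (N twoS)) ℂ)
    (x y : Conf twoS L) (k : Fin (N twoS)) :
    site twoS L j A (Function.update x j k) y =
      if ∀ i, i ≠ j → x i = y i then A k (y j) else 0 := by
  simp only [site, Matrix.of_apply, Function.update_self]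
  congr 1
  exact propext <| forall_congr' fun i => imp_congr_right fun hij => by
    rw [Function.update_of_ne hij]

lemma site_mul_apply (j : Fin L) (A : Matrix (Fin (N twoS)) (Fin (N twoS)) ℂ) (B : Op twoS L)
    (x y : Conf twoS L) :
    (site twoS L j A * B) x y = ∑ k, A (x j) k * B (Function.update x j k) y := by
  rw [Matrix.mul_apply, sum_eq_sum_update j x _ fun z hz => by
    rw [site, Matrix.of_apply, if_neg hz, zero_mul]]
  refine Finset.sum_congr rfl fun k _ => ?_
  rw [site, Matrix.of_apply, if_pos fun i hij => by rw [Function.update_of_ne hij],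
    Function.update_self]

lemma site_mul (j : Fin L) (A B : Matrix (Fin (N twoS)) (Fin (N twoS)) ℂ) :
    site twoS L j A * site twoS L j B = site twoS L j (A * B) := by
  ext x y
  simp only [site_mul_apply, site_apply_update, mul_ite, mul_zero]
  rw [site, Matrix.of_apply, Matrix.mul_apply]
  split_ifs <;> simp

lemma site_mul_site_apply {j l : Fin L} (hjl : j ≠ l)
    (A B : Matrix (Fin (N twoS)) (Fin (N twoS)) ℂ) (x y : Conf twoS L) :
    (site twoS L j A * site twoS L l B) x y =
      if ∀ i, i ≠ j → i ≠ l → x i = y i then A (x j) (y j) * B (x l) (y l) else 0 := by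
  rw [site_mul_apply, Fintype.sum_eq_single (y j)]
  · simp only [site, Matrix.of_apply, Function.update_of_ne hjl.symm]
    rw [mul_ite, mul_zero]
    refine if_congr ⟨fun h i hij hil => ?_, fun h i hil => ?_⟩ rfl rfl
    · rw [← h i hil, Function.update_of_ne hij]
    · by_cases hij : i = j
      · subst hij; rw [Function.update_self]
      · rw [Function.update_of_ne hij, h i hij hil]
  · intro k hk
    rw [site, Matrix.of_apply, if_neg fun h => hk (by rw [← h j hjl, Function.update_self]),
      mul_zero]

lemma commute_site {j l : Fin L} (hjl : j ≠ l) (A B : Matrix (Fin (N twoS)) (Fin (N twoS)) ℂ) :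
    Commute (site twoS L j A) (site twoS L l B) := by
  ext x y
  rw [site_mul_site_apply hjl, site_mul_site_apply (Ne.symm hjl), mul_comm]
  exact if_congr ⟨fun h i hil hij => h i hij hil, fun h i hij hil => h i hil hij⟩ rfl rfl

lemma site_sub (j : Fin L) (A B : Matrix (Fin (N twoS)) (Fin (N twoS)) ℂ) :
    site twoS L j (A - B) = site twoS L j A - site twoS L j B := by
  ext x y
  simp only [site, Matrix.of_apply, Matrix.sub_apply]
  split_ifs <;> simp

lemma site_smul (j : Fin L) (c : ℂ) (A : Matrix (Fin (N twoS)) (Fin (N twoS)) ℂ) :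
    site twoS L j (c • A) = c • site twoS L j A := by
  ext x y
  simp only [site, Matrix.of_apply, Matrix.smul_apply]
  split_ifs <;> simp

lemma site_conjTranspose (j : Fin L) (A : Matrix (Fin (N twoS)) (Fin (N twoS)) ℂ) :
    (site twoS L j A)ᴴ = site twoS L j Aᴴ := by
  ext x y
  simp only [site, Matrix.of_apply, Matrix.conjTranspose_apply]
  refine (apply_ite star _ _ _).trans (if_congr ?_ rfl (star_zero ℂ))
  exact forall_congr' fun i => imp_congr_right fun _ => eq_comm

lemma site_diagonal (j : Fin L) (v : Fin (N twoS) → ℂ) :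
    site twoS L j (Matrix.diagonal v) = Matrix.diagonal fun x : Conf twoS L => v (x j) := by
  ext x y
  by_cases hxy : x = y
  · subst hxy; simp [site]
  · rw [Matrix.diagonal_apply_ne _ hxy, site, Matrix.of_apply]
    split_ifs with h
    · exact Matrix.diagonal_apply_ne _ fun hj => hxy <| funext fun i => by
        by_cases hij : i = j
        · subst hij; exact hj
        · exact h i hij
    · rfl

lemma lie_site (j : Fin L) (A B : Matrix (Fin (N twoS)) (Fin (N twoS)) ℂ) :
    ⁅site twoS L j A, site twoS L j B⁆ = site twoS L j ⁅A, B⁆ := by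
  rw [Ring.lie_def, Ring.lie_def, site_mul, site_mul, site_sub]

lemma lie_sum_site (j : Fin L) (A B : Matrix (Fin (N twoS)) (Fin (N twoS)) ℂ) :
    ⁅∑ k, site twoS L k A, site twoS L j B⁆ = site twoS L j ⁅A, B⁆ := by
  rw [sum_lie, Fintype.sum_eq_single j fun k hkj =>
    commute_iff_lie_eq.mp (commute_site hkj A B), lie_site]

lemma SyT_isHermitian : (SyT twoS L).IsHermitian := by
  rw [Matrix.IsHermitian, SyT, Matrix.conjTranspose_sum]
  exact Finset.sum_congr rfl fun j _ => by rw [site_conjTranspose, SyMat_isHermitian.eq]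

lemma Uy_conjTranspose_mul_self : (Uy twoS L)ᴴ * Uy twoS L = 1 := by
  set A := (-Complex.I * ((Real.pi : ℝ) : ℂ)) • SyT twoS L
  have hA : Aᴴ = -A := by
    rw [Matrix.conjTranspose_smul, SyT_isHermitian.eq, ← neg_smul]
    congr 1
    simp [Complex.conj_ofReal]
  rw [Uy, ← Matrix.exp_conjTranspose, hA,
    ← Matrix.exp_add_of_commute _ _ (Commute.refl A).neg_left, neg_add_cancel,
    NormedSpace.exp_zero]

lemma Uy_mul_site_SzMat (j : Fin L) :
    Uy twoS L * site twoS L j (SzMat twoS) = -site twoS L j (SzMat twoS) * Uy twoS L := by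
  -- `exp` only sees the topology, so any Banach-algebra norm on matrices will do.
  let _ : NormedRing (Op twoS L) := Matrix.linftyOpNormedRing
  let _ : NormedAlgebra ℝ (Op twoS L) := Matrix.linftyOpNormedAlgebra
  have hUy : Uy twoS L = NormedSpace.exp (Real.pi • (-Complex.I • SyT twoS L)) := by
    rw [Uy, ← Complex.coe_smul, smul_smul, mul_comm]
  refine hUy ▸ exp_pi_smul_mul_eq_neg_mul (C := site twoS L j (SxMat twoS)) ?_ ?_
  · rw [smul_lie, SyT, lie_sum_site, lie_SyMat_SzMat, site_smul, smul_smul,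
      neg_mul, Complex.I_mul_I, neg_neg, one_smul]
  · rw [smul_lie, SyT, lie_sum_site, lie_SyMat_SxMat, site_smul, smul_smul,
      neg_mul_neg, Complex.I_mul_I, neg_one_smul]

lemma eq_rev_of_Uy_apply_ne_zero {x y : Conf twoS L} (h : Uy twoS L x y ≠ 0) :
    y = fun j => Fin.rev (x j) := by
  funext j
  have hxy := congrFun (congrFun (Uy_mul_site_SzMat (twoS := twoS) j) x) y
  rw [SzMat, site_diagonal, Matrix.mul_diagonal, neg_mul, Matrix.neg_apply,
    Matrix.diagonal_mul] at hxy
  have hm : ((mval twoS (y j) + mval twoS (x j) : ℝ) : ℂ) = 0 :=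
    (mul_eq_zero.mp (by push_cast; linear_combination hxy)).resolve_left h
  have hk : (y j : ℕ) + x j = twoS := by
    simp only [mval, spin, Complex.ofReal_eq_zero] at hm
    exact_mod_cast (by linarith : ((y j : ℕ) : ℝ) + (x j : ℕ) = twoS)
  ext
  rw [Fin.val_rev]
  have := (x j).is_le
  simp only [N]
  omega

end SpinAlgebra

section Chain

variable {twoS L : ℕ} [NeZero L]

lemma Pop_mul_apply (M : Op twoS L) (x y : Conf twoS L) :
    (Pop twoS L * M) x y = M (fun i => x (-i)) y := by
  rw [Matrix.mul_apply, Fintype.sum_eq_single (fun i => x (-i)) fun z hz => ?_]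
  · simp [Pop]
  · rw [Pop, Matrix.of_apply, if_neg, zero_mul]
    rintro rfl
    exact hz (funext fun i => by simp)

lemma Pop_mul_self : Pop twoS L * Pop twoS L = 1 := by
  ext x y
  rw [Pop_mul_apply, Pop, Matrix.of_apply, Matrix.one_apply]
  refine if_congr ⟨fun h => funext fun i => ?_, fun h => h ▸ rfl⟩ rfl rfl
  simpa using congrFun h (-i)

lemma Pop_conjTranspose : (Pop twoS L)ᴴ = Pop twoS L := by
  ext x y
  simp only [Pop, Matrix.conjTranspose_apply, Matrix.of_apply, apply_ite star, star_one, star_zero]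
  refine if_congr ⟨fun h => funext fun i => ?_, fun h => funext fun i => ?_⟩ rfl rfl <;>
    simp [h]

lemma Pop_mul_Uy_conjTranspose_mul_self :
    (Pop twoS L * Uy twoS L)ᴴ * (Pop twoS L * Uy twoS L) = 1 := by
  rw [Matrix.conjTranspose_mul, Pop_conjTranspose, Matrix.mul_assoc, ← Matrix.mul_assoc (Pop _ _),
    Pop_mul_self, Matrix.one_mul, Uy_conjTranspose_mul_self]

lemma eq_flip_of_Pop_mul_Uy_apply_ne_zero {x y : Conf twoS L}
    (h : (Pop twoS L * Uy twoS L) x y ≠ 0) :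
    y = fun i => Fin.rev (x (-i)) := by
  rw [Pop_mul_apply] at h
  exact eq_rev_of_Uy_apply_ne_zero h

/-- `Σ_{j=1}^L j (S - m_j)`, minus the eigenvalue of `twistGen` on the basis vector `x`. -/
def twistWeight (x : Conf twoS L) : ℕ := ∑ j ∈ Finset.Icc 1 L, j * (x (j : Fin L) : ℕ)

lemma SzMat_sub_spin_smul_one :
    SzMat twoS - ((spin twoS : ℝ) : ℂ) • (1 : Matrix (Fin (N twoS)) (Fin (N twoS)) ℂ) =
      Matrix.diagonal fun k : Fin (N twoS) => -((k : ℕ) : ℂ) := by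
  ext a b
  by_cases hab : a = b
  · subst hab; simp [SzMat, mval]
  · simp [SzMat, hab]

lemma twistGen_eq_diagonal :
    twistGen twoS L = Matrix.diagonal fun x => -(twistWeight x : ℂ) := by
  ext x y
  simp only [twistGen, SzMat_sub_spin_smul_one, site_diagonal, Matrix.sum_apply,
    Matrix.smul_apply, Matrix.diagonal_apply, twistWeight]
  split_ifs <;> simp [Finset.sum_neg_distrib]

lemma Utw_eq_diagonal (ε : ℝ) :
    Utw twoS L ε = Matrix.diagonal fun x =>
      Complex.exp (ε * ((2 * Real.pi / L : ℝ) : ℂ) * Complex.I) ^ twistWeight x := by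
  rw [Utw, twistGen_eq_diagonal, ← Matrix.diagonal_smul, Matrix.exp_diagonal]
  congr 1
  funext x
  simp only [Pi.exp_def, Pi.smul_apply, smul_eq_mul]
  rw [← Complex.exp_eq_exp_ℂ, ← Complex.exp_nat_mul]
  ring_nf

lemma exp_two_pi_div_pow_half (hL : Even L) {ε : ℝ} (hε : ε = 1 ∨ ε = -1) :
    Complex.exp (ε * ((2 * Real.pi / L : ℝ) : ℂ) * Complex.I) ^ (L / 2) = -1 := by
  have hL0 : (L : ℂ) ≠ 0 := Nat.cast_ne_zero.mpr (NeZero.ne L)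
  rw [← Complex.exp_nat_mul, Nat.cast_div hL.two_dvd two_ne_zero]
  rcases hε with rfl | rfl
  · rw [← Complex.exp_pi_mul_I]; congr 1; push_cast; field_simp
  · rw [← Complex.exp_neg_pi_mul_I]; congr 1; push_cast; field_simp

lemma twistWeight_cast (x : Conf twoS L) :
    (twistWeight x : ZMod L) = ∑ i : Fin L, ((i : ℕ) : ZMod L) * ((x i : ℕ) : ZMod L) := by
  rw [twistWeight, Nat.cast_sum,
    sum_Icc_one_eq_sum_range (fun j => ((j * (x (j : Fin L) : ℕ) : ℕ) : ZMod L)) (by simp),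
    ← Fin.sum_univ_eq_sum_range]
  simp

lemma twistWeight_flip_modEq (hL : Even L) (x : Conf twoS L) :
    twistWeight (fun i => Fin.rev (x (-i))) ≡ twistWeight x + twoS * (L / 2) [MOD L] := by
  rw [← ZMod.natCast_eq_natCast_iff, Nat.cast_add, Nat.cast_mul, twistWeight_cast,
    twistWeight_cast, ← Equiv.sum_comp (Equiv.neg (Fin L))
      (fun i => ((i : ℕ) : ZMod L) * ((Fin.rev (x (-i)) : ℕ) : ZMod L))]
  have hterm : ∀ i : Fin L,
      (((-i : Fin L) : ℕ) : ZMod L) * ((Fin.rev (x (- -i)) : ℕ) : ZMod L) =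
        ((i : ℕ) : ZMod L) * ((x i : ℕ) : ZMod L) - ((i : ℕ) : ZMod L) * twoS := by
    intro i
    have hrev : ((Fin.rev (x i) : ℕ) : ZMod L) = twoS - ((x i : ℕ) : ZMod L) := by
      rw [Fin.val_rev, show N twoS - ((x i : ℕ) + 1) = twoS - x i by simp [N],
        Nat.cast_sub (x i).is_le]
    rw [natCast_val_neg, neg_neg, hrev]
    ring
  simp only [Equiv.neg_apply, hterm, Finset.sum_sub_distrib, ← Finset.sum_mul,
    sum_natCast_val hL]
  ring

theorem Pop_mul_Uy_mul_Utw (hL : Even L) {ε : ℝ} (hε : ε = 1 ∨ ε = -1) :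
    Pop twoS L * Uy twoS L * Utw twoS L ε =
      (-1 : ℂ) ^ twoS • (Utw twoS L ε * (Pop twoS L * Uy twoS L)) := by
  set ζ := Complex.exp (ε * ((2 * Real.pi / L : ℝ) : ℂ) * Complex.I)
  have hhalf : ζ ^ (L / 2) = -1 := exp_two_pi_div_pow_half hL hε
  have hfull : ζ ^ L = 1 := calc
    ζ ^ L = (ζ ^ (L / 2)) ^ 2 := by rw [← pow_mul, Nat.div_two_mul_two_of_even hL]
    _ = 1 := by rw [hhalf, neg_one_sq]
  rw [Utw_eq_diagonal]
  ext x y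
  rw [Matrix.mul_diagonal, Matrix.smul_apply, Matrix.diagonal_mul, smul_eq_mul]
  by_cases h : (Pop twoS L * Uy twoS L) x y = 0
  · simp [h]
  · obtain rfl := eq_flip_of_Pop_mul_Uy_apply_ne_zero h
    rw [pow_eq_neg_one_pow_mul_pow hfull hhalf (twistWeight_flip_modEq hL x)]
    ring

end Chain

theorem combined_parity_spin_reversal_twist_general (twoS L : ℕ) [NeZero L]
    (hLeven : Even L) :
    ((Pop twoS L * Uy twoS L) * Utw twoS L 1 =
        ((-1 : ℂ) ^ twoS) • (Utw twoS L 1 * (Pop twoS L * Uy twoS L)) ∧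
      (Pop twoS L * Uy twoS L) * Utw twoS L (-1) =
        ((-1 : ℂ) ^ twoS) • (Utw twoS L (-1) * (Pop twoS L * Uy twoS L))) ∧
    (Odd twoS → ∀ ψ₀ : Conf twoS L → ℂ,
      ((Pop twoS L * Uy twoS L).mulVec ψ₀ = ψ₀ ∨
        (Pop twoS L * Uy twoS L).mulVec ψ₀ = -ψ₀) →
      dotProduct (star ψ₀) ((Utw twoS L 1).mulVec ψ₀) = 0) := by
  have hcomm := fun ε (hε : ε = 1 ∨ ε = -1) => Pop_mul_Uy_mul_Utw (twoS := twoS) hLeven hε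
  refine ⟨⟨hcomm 1 (.inl rfl), hcomm (-1) (.inr rfl)⟩, fun hodd ψ₀ hψ₀ => ?_⟩
  have hanti : Pop twoS L * Uy twoS L * Utw twoS L 1 =
      -(Utw twoS L 1 * (Pop twoS L * Uy twoS L)) := by
    rw [hcomm 1 (.inl rfl), hodd.neg_one_pow, neg_one_smul]
  obtain ⟨c, hc⟩ : ∃ c : ℂ, (Pop twoS L * Uy twoS L) *ᵥ ψ₀ = c • ψ₀ :=
    hψ₀.elim (fun h => ⟨1, by rw [h, one_smul]⟩) fun h => ⟨-1, by rw [h, neg_one_smul]⟩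
  exact star_dotProduct_mulVec_eq_zero_of_anticommute Pop_mul_Uy_conjTranspose_mul_self hanti hc

/-- Theorem 8: `(P U^y_π) U^tw_{±2π} = (-1)^{2S} U^tw_{±2π} (P U^y_π)`;
consequently, for `2S` odd, any eigenvector of `P U^y_π` (eigenvalue `±1`) is
orthogonal to its twist. -/
theorem combined_parity_spin_reversal_twist (twoS L : ℕ) [NeZero L]
    (hS : 0 < twoS) (hL4 : 4 ≤ L) (hLeven : Even L) :
    ((Pop twoS L * Uy twoS L) * Utw twoS L 1 =
        ((-1 : ℂ) ^ twoS) • (Utw twoS L 1 * (Pop twoS L * Uy twoS L)) ∧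
      (Pop twoS L * Uy twoS L) * Utw twoS L (-1) =
        ((-1 : ℂ) ^ twoS) • (Utw twoS L (-1) * (Pop twoS L * Uy twoS L))) ∧
    (Odd twoS → ∀ ψ₀ : Conf twoS L → ℂ,
      ((Pop twoS L * Uy twoS L).mulVec ψ₀ = ψ₀ ∨
        (Pop twoS L * Uy twoS L).mulVec ψ₀ = -ψ₀) →
      dotProduct (star ψ₀) ((Utw twoS L 1).mulVec ψ₀) = 0) :=
  combined_parity_spin_reversal_twist_general twoS L hLeven

end LSM
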